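/- arXiv:1610.05600 — 5 statements merged into one kernel-verified Lean document; each statement's English description precedes it below -/
import Mathlib

section
/- Let G be a finite group and let H, H' be subgroups of G. The following are equivalent: (i) for every element g of G, the number of elements of H that are conjugate in G to g equals the number of elements of H' that are conjugate in G to g; (ii) the induced characters Ind_H^G 1_H and Ind_{H'}^G 1_{H'} of the trivial characters of H and H' are equal as class functions on G (equivalently, the induced representations Ind_H^G 1 and Ind_{H'}^G 1 are isomorphic). -/
open scoped Classical

/-- The class function on `G` induced from a function `χ` on a subgroup `H`:
`(Ind_H^G χ)(g) = (1/|H|) · Σ_{x ∈ G, x⁻¹gx ∈ H} χ(x⁻¹gx)`. -/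
noncomputable def indFn {G : Type*} [Group G] (H : Subgroup G) (χ : H → ℂ) : G → ℂ :=
  fun g => (Nat.card H : ℂ)⁻¹ *
    ∑ᶠ x : G, if h : x⁻¹ * g * x ∈ H then χ ⟨x⁻¹ * g * x, h⟩ else 0

/-!
Write `X_H(g) = {x ∈ G | x⁻¹ g x ∈ H}`, so that `(Ind_H^G 1)(g) = |X_H(g)| / |H|`.
The map `x ↦ x⁻¹ g x` sends `X_H(g)` onto the `G`-conjugates of `g` lying in `H`, and its
fibres are cosets of the centralizer of `g`; hence `|X_H(g)|` is the number of those conjugates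
times `|C_G(g)|`. Both conditions therefore amount to `|X_H(g)| = |X_{H'}(g)|` for all `g`,
provided `|H| = |H'|`. Evaluating the induced characters at `1` gives `|G|/|H| = |G|/|H'|`;
conversely, double counting gives `∑_g |X_H(g)| = |G| |H|`.
-/

namespace Subgroup

variable {G : Type*} [Group G]

theorem card_conj_eq_card_centralizer {g h : G} (hgh : IsConj g h) :
    Nat.card {x : G // x⁻¹ * g * x = h} = Nat.card (centralizer {g}) := by
  obtain ⟨c, rfl⟩ := isConj_iff.mp hgh
  refine Nat.card_congr (Equiv.subtypeEquiv (Equiv.mulRight c) fun x => ?_)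
  rw [Equiv.coe_mulRight, mem_centralizer_singleton_iff]
  constructor <;> intro hx
  · calc x * c * g = x * (c * g * c⁻¹) * c := by group
      _ = x * (x⁻¹ * g * x) * c := by rw [hx]
      _ = g * (x * c) := by group
  · calc x⁻¹ * g * x = x⁻¹ * (g * (x * c)) * c⁻¹ := by group
      _ = x⁻¹ * (x * c * g) * c⁻¹ := by rw [hx]
      _ = c * g * c⁻¹ := by group

theorem card_conj_mem_eq_card_isConj_mul_card_centralizer [Finite G] (H : Subgroup G) (g : G) :
    Nat.card {x : G // x⁻¹ * g * x ∈ H} =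
      Nat.card {h : H // IsConj g (h : G)} * Nat.card (centralizer {g}) := by
  have : Fintype {h : H // IsConj g (h : G)} := Fintype.ofFinite _
  let e : {x : G // x⁻¹ * g * x ∈ H} ≃
      Σ h : {h : H // IsConj g (h : G)}, {x : G // x⁻¹ * g * x = h} :=
    { toFun x := ⟨⟨⟨_, x.2⟩, isConj_iff.mpr ⟨x.1⁻¹, by group⟩⟩, ⟨x, rfl⟩⟩
      invFun p := ⟨p.2, by rw [p.2.2]; exact p.1.1.2⟩
      left_inv _ := rfl
      right_inv := by rintro ⟨⟨⟨h, hH⟩, hc⟩, x, hx⟩; dsimp only at hx; subst hx; rfl }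
  rw [Nat.card_congr e, Nat.card_sigma,
    Finset.sum_congr rfl fun h _ => card_conj_eq_card_centralizer h.2,
    Finset.sum_const, Finset.card_univ, smul_eq_mul, ← Nat.card_eq_fintype_card]

theorem sum_card_conj_mem [Fintype G] (H : Subgroup G) :
    ∑ g : G, Nat.card {x : G // x⁻¹ * g * x ∈ H} = Nat.card G * Nat.card H := by
  let e : (Σ g : G, {x : G // x⁻¹ * g * x ∈ H}) ≃ G × H :=
    { toFun p := (p.2, ⟨_, p.2.2⟩)
      invFun q := ⟨q.1 * q.2 * q.1⁻¹, ⟨q.1, by simp [mul_assoc]⟩⟩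
      left_inv := by rintro ⟨g, x, hx⟩; exact Sigma.subtype_ext (by group) rfl
      right_inv := by rintro ⟨x, h⟩; ext <;> simp [mul_assoc] }
  rw [← Nat.card_sigma, Nat.card_congr e, Nat.card_prod]

theorem card_eq_of_card_conj_mem_eq [Fintype G] {H H' : Subgroup G}
    (h : ∀ g : G, Nat.card {x : G // x⁻¹ * g * x ∈ H} = Nat.card {x : G // x⁻¹ * g * x ∈ H'}) :
    Nat.card H = Nat.card H' :=
  Nat.eq_of_mul_eq_mul_left Nat.card_pos <| by
    rw [← sum_card_conj_mem, ← sum_card_conj_mem, Fintype.sum_congr _ _ h]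

end Subgroup

open Subgroup

theorem indFn_one_apply {G : Type*} [Group G] [Finite G] (H : Subgroup G) (g : G) :
    indFn H (fun _ => 1) g = Nat.card {x : G // x⁻¹ * g * x ∈ H} / Nat.card H := by
  have : Fintype G := Fintype.ofFinite G
  rw [indFn, finsum_eq_sum_of_fintype, inv_mul_eq_div]
  simp [Finset.sum_boole, Nat.card_eq_fintype_card, Fintype.card_subtype]

theorem indFn_one_eq_iff {G : Type*} [Group G] [Fintype G] (H H' : Subgroup G) :
    indFn H (fun _ => 1) = indFn H' (fun _ => 1) ↔
      ∀ g : G, Nat.card {x : G // x⁻¹ * g * x ∈ H} = Nat.card {x : G // x⁻¹ * g * x ∈ H'} := by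
  refine ⟨fun hind g => ?_, fun h => funext fun g => ?_⟩
  · have hcard : (Nat.card H : ℂ) = Nat.card H' := by
      simpa [indFn_one_apply, div_eq_mul_inv] using congrFun hind 1
    have := congrFun hind g
    rwa [indFn_one_apply, indFn_one_apply, hcard, div_left_inj' (by simp), Nat.cast_inj] at this
  · rw [indFn_one_apply, indFn_one_apply, h, card_eq_of_card_conj_mem_eq h]

/-- **Gassmann equivalence via induced trivial characters.**
For a finite group `G` with subgroups `H`, `H'`, the condition that every `g : G` has the same
number of `G`-conjugates in `H` as in `H'` is equivalent to the equality of the characters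
induced from the trivial characters of `H` and of `H'` (equivalently, by character theory,
to the isomorphy of the induced representations `Ind_H^G 1` and `Ind_{H'}^G 1`). -/
theorem gassmann_iff_ind_trivial_eq {G : Type*} [Group G] [Fintype G] (H H' : Subgroup G) :
    (∀ g : G, Nat.card {h : H // IsConj g (h : G)} = Nat.card {h : H' // IsConj g (h : G)}) ↔
      indFn H (fun _ => 1) = indFn H' (fun _ => 1) := by
  rw [indFn_one_eq_iff]
  refine forall_congr' fun g => ?_
  rw [card_conj_mem_eq_card_isConj_mul_card_centralizer,
    card_conj_mem_eq_card_isConj_mul_card_centralizer, Nat.mul_left_inj Nat.card_pos.ne']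
end

section
/- Let G be a finite group and let H, H' be subgroups of G forming a Gassmann triple (G, H, H'). If H is cyclic, then H and H' are conjugate subgroups of G. -/
/-- A Gassmann triple `(G, H, H')`: every `g : G` has the same number of `G`-conjugates
in `H` as in `H'`. -/
def IsGassmannTriple {G : Type*} [Group G] (H H' : Subgroup G) : Prop :=
  ∀ g : G, Nat.card {h : H // IsConj g (h : G)} = Nat.card {h : H' // IsConj g (h : G)}

lemma gassmann_card_eq {G : Type*} [Group G] [Fintype G] (H H' : Subgroup G)
    (hG : IsGassmannTriple H H') : Nat.card H = Nat.card H' := by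
  classical
  have key : ∀ (K : Subgroup G),
      Nat.card K = ∑ c : ConjClasses G, Nat.card {h : K // ConjClasses.mk (h : G) = c} := by
    intro K
    rw [Nat.card_congr
      (Equiv.sigmaFiberEquiv (fun h : K => ConjClasses.mk (h : G))).symm]
    simp_rw [Nat.card_eq_fintype_card]
    exact Fintype.card_sigma
  rw [key H, key H']
  refine Finset.sum_congr rfl fun c _ => ?_
  obtain ⟨g, rfl⟩ := c.exists_rep
  have e : ∀ (K : Subgroup G),
      Nat.card {h : K // ConjClasses.mk (h : G) = ConjClasses.mk g}
        = Nat.card {h : K // IsConj g (h : G)} := fun K =>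
    Nat.card_congr (Equiv.subtypeEquivRight fun h => by
      rw [ConjClasses.mk_eq_mk_iff_isConj, isConj_comm])
  rw [e H, e H', hG g]

/-- If `(G, H, H')` is a Gassmann triple with `H` cyclic, then `H` and `H'` are
conjugate subgroups of `G`. -/
theorem gassmann_trivial_of_cyclic {G : Type*} [Group G] [Fintype G] (H H' : Subgroup G)
    (hG : IsGassmannTriple H H') (hcyc : IsCyclic H) :
    ∃ x : G, Subgroup.map (MulAut.conj x).toMonoidHom H = H' := by
  classical
  obtain ⟨h, hh⟩ := hcyc.exists_generator
  -- H = zpowers ↑h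
  have hHz : Subgroup.zpowers (h : G) = H := by
    apply le_antisymm (Subgroup.zpowers_le.mpr h.2)
    intro a ha
    obtain ⟨n, hn⟩ := hh ⟨a, ha⟩
    exact ⟨n, by simpa using congrArg Subtype.val hn⟩
  have hcard : Nat.card H = Nat.card H' := gassmann_card_eq H H' hG
  have horder : orderOf (h : G) = Nat.card H := by
    rw [← Nat.card_zpowers, hHz]
  -- find h' ∈ H' conjugate to h
  have h1 : Nat.card {k : H' // IsConj (h : G) (k : G)} ≠ 0 := by
    rw [← hG (h : G)]
    exact Nat.card_ne_zero.mpr ⟨⟨⟨h, IsConj.refl _⟩⟩, inferInstance⟩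
  obtain ⟨⟨k, hk⟩⟩ := Nat.card_ne_zero.mp h1 |>.1
  obtain ⟨x, hx⟩ := isConj_iff.mp hk
  refine ⟨x, ?_⟩
  have hmap : Subgroup.map (MulAut.conj x).toMonoidHom H = Subgroup.zpowers (k : G) := by
    rw [← hHz, MonoidHom.map_zpowers]
    congr 1
  rw [hmap]
  apply Subgroup.eq_of_le_of_card_ge (Subgroup.zpowers_le.mpr k.2)
  rw [Nat.card_zpowers, ← hcard, ← horder]
  have : orderOf (h : G) = orderOf (k : G) := by
    have := orderOf_injective (MulAut.conj x).toMonoidHom (MulEquiv.injective _) (h : G)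
    simp only [MulEquiv.coe_toMonoidHom, MulAut.conj_apply] at this
    rw [← this, hx]
  exact this.le
end

section
/- Let p be a prime number, let G be the alternating group on p letters, and let H, H' be subgroups of G of index p forming a Gassmann triple (G, H, H'). Then H and H' are conjugate subgroups of G. -/
/-! An index-`p` subgroup `K` of `A_p` has order `(p - 1)! / 2`, which is prime to `p`, so `K` is
intransitive on the `p` letters. The setwise stabiliser of a `k`-element orbit has index
`C(p, k)`, a divisor of `p`, and `C(p, k) > p` for `2 ≤ k ≤ p - 2`; hence the orbit or its
complement is a single point fixed by `K`. Comparing indices, `K` is a point stabiliser, and any two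
point stabilisers are conjugate because `A_p` is transitive. -/

open MulAction
open scoped Pointwise

theorem Nat.self_lt_choose {n k : ℕ} (hk : 2 ≤ k) (hkn : k + 2 ≤ n) : n < n.choose k := by
  induction n, hkn using Nat.le_induction with
  | base =>
    rw [Nat.choose_symm_add, Nat.choose_two_right, Nat.lt_iff_add_one_le,
      Nat.le_div_iff_mul_le two_pos, show k + 2 - 1 = k + 1 by omega]
    nlinarith
  | succ n hkn ih =>
    obtain ⟨j, rfl⟩ : ∃ j, k = j + 1 := ⟨k - 1, by omega⟩
    have := Nat.choose_pos (show j ≤ n by omega)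
    rw [Nat.choose_succ_succ']
    omega

theorem Subgroup.le_stabilizer_orbit {G α : Type*} [Group G] [MulAction G α] (K : Subgroup G)
    (a : α) : K ≤ stabilizer G (orbit K a) :=
  fun g hg => smul_orbit (⟨g, hg⟩ : K) a

namespace alternatingGroup

variable {α : Type*} [Fintype α] [DecidableEq α]

theorem index_stabilizer_set (hα : 3 ≤ Nat.card α) (s : Set α) :
    (stabilizer (alternatingGroup α) s).index = (Nat.card α).choose s.ncard := by
  have := Set.powersetCard.isPretransitive_alternatingGroup (n := s.ncard) hα
  let t : Set.powersetCard α s.ncard :=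
    ⟨s.toFinite.toFinset, (Set.ncard_eq_toFinset_card s).symm⟩
  have ht : (t : Set α) = s := s.toFinite.coe_toFinset
  rw [← ht, ← Set.powersetCard.stabilizer_coe, ht, ← Set.powersetCard.card]
  exact index_stabilizer_of_transitive (alternatingGroup α) t

theorem two_mul_card_mul_index [Nontrivial α] (K : Subgroup (alternatingGroup α)) :
    2 * Nat.card K * K.index = (Nat.card α).factorial := by
  rw [mul_assoc, K.card_mul_index, Nat.card_eq_fintype_card, two_mul_card_alternatingGroup,
    Fintype.card_perm, Nat.card_eq_fintype_card]

variable {K : Subgroup (alternatingGroup α)}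

theorem three_le_card_of_index_eq_card (hp : (Nat.card α).Prime) (hK : K.index = Nat.card α) :
    3 ≤ Nat.card α := by
  have : Nontrivial α := Finite.one_lt_card_iff_nontrivial.mp hp.one_lt
  have h := two_mul_card_mul_index K
  have hK0 : 0 < Nat.card K := Nat.card_pos
  by_contra! h2
  rw [hK, show Nat.card α = 2 by linarith [hp.two_le]] at h
  simp only [Nat.factorial_two] at h
  omega

theorem not_card_dvd_card_of_index_eq_card (hp : (Nat.card α).Prime)
    (hK : K.index = Nat.card α) : ¬ Nat.card α ∣ Nat.card K := by
  have : Nontrivial α := Finite.one_lt_card_iff_nontrivial.mp hp.one_lt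
  intro hdvd
  have h := two_mul_card_mul_index K
  rw [hK, ← Nat.mul_factorial_pred hp.ne_zero, mul_comm _ (Nat.card α)] at h
  have h' : 2 * Nat.card K = (Nat.card α - 1).factorial := Nat.eq_of_mul_eq_mul_left hp.pos h
  have := hp.dvd_factorial.mp (h' ▸ hdvd.mul_left 2)
  have := hp.two_le
  omega

theorem orbit_ne_univ_of_index_eq_card (hp : (Nat.card α).Prime) (hK : K.index = Nat.card α)
    (a : α) : orbit K a ≠ Set.univ := by
  intro h
  apply not_card_dvd_card_of_index_eq_card hp hK
  rw [← Set.ncard_univ, ← h, ← index_stabilizer]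
  exact (stabilizer K a).index_dvd_card

theorem exists_le_stabilizer_of_index_eq_card (hp : (Nat.card α).Prime)
    (hK : K.index = Nat.card α) : ∃ a : α, K ≤ stabilizer (alternatingGroup α) a := by
  suffices ∃ s : Set α, K ≤ stabilizer (alternatingGroup α) s ∧ s.ncard = 1 by
    obtain ⟨s, hKs, hs⟩ := this
    obtain ⟨a, rfl⟩ := Set.ncard_eq_one.mp hs
    exact ⟨a, stabilizer_singleton (G := alternatingGroup α) a ▸ hKs⟩
  obtain ⟨a⟩ : Nonempty α := (Nat.card_pos_iff.mp hp.pos).1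
  set O := orbit K a
  have hKO : K ≤ stabilizer (alternatingGroup α) O := K.le_stabilizer_orbit a
  have hchoose : (Nat.card α).choose O.ncard ≤ Nat.card α := by
    rw [← index_stabilizer_set (three_le_card_of_index_eq_card hp hK), ← hK]
    exact Subgroup.index_antitone hKO
  have hsum : O.ncard + Oᶜ.ncard = Nat.card α := Set.ncard_add_ncard_compl O
  have hO : 0 < O.ncard := (Set.ncard_pos O.toFinite).mpr (nonempty_orbit a)
  have hOc : 0 < Oᶜ.ncard := (Set.ncard_pos Oᶜ.toFinite).mpr <|
    Set.nonempty_compl.mpr (orbit_ne_univ_of_index_eq_card hp hK a)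
  by_cases h : O.ncard = 1
  · exact ⟨O, hKO, h⟩
  by_cases hc : Oᶜ.ncard = 1
  · exact ⟨Oᶜ, (stabilizer_compl (alternatingGroup α) α).symm ▸ hKO, hc⟩
  exact absurd hchoose (Nat.self_lt_choose (by omega) (by omega)).not_ge

theorem exists_eq_stabilizer_of_index_eq_card (hp : (Nat.card α).Prime)
    (hK : K.index = Nat.card α) : ∃ a : α, K = stabilizer (alternatingGroup α) a := by
  obtain ⟨a, hKa⟩ := exists_le_stabilizer_of_index_eq_card hp hK
  have := isPretransitive_of_three_le_card α (three_le_card_of_index_eq_card hp hK)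
  refine ⟨a, hKa.eq_of_not_lt fun hlt => ?_⟩
  have := Subgroup.index_strictAnti hlt
  rw [index_stabilizer_of_transitive, hK] at this
  exact lt_irrefl _ this

end alternatingGroup

theorem gassmann_trivial_alternating_group_general (p : ℕ) (hp : p.Prime)
    (H H' : Subgroup (alternatingGroup (Fin p)))
    (hH : H.index = p) (hH' : H'.index = p) :
    ∃ x : alternatingGroup (Fin p), Subgroup.map (MulAut.conj x).toMonoidHom H = H' := by
  rw [← Nat.card_fin p] at hp
  replace hH : H.index = Nat.card (Fin p) := hH.trans (Nat.card_fin p).symm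
  replace hH' : H'.index = Nat.card (Fin p) := hH'.trans (Nat.card_fin p).symm
  obtain ⟨a, rfl⟩ := alternatingGroup.exists_eq_stabilizer_of_index_eq_card hp hH
  obtain ⟨b, rfl⟩ := alternatingGroup.exists_eq_stabilizer_of_index_eq_card hp hH'
  have := alternatingGroup.isPretransitive_of_three_le_card (Fin p)
    (alternatingGroup.three_le_card_of_index_eq_card hp hH)
  obtain ⟨x, rfl⟩ := exists_smul_eq (alternatingGroup (Fin p)) a b
  exact ⟨x, (stabilizer_smul_eq_stabilizer_map_conj x a).symm⟩

/-- If `p` is prime, `G` is the alternating group on `p` letters and `(G, H, H')` is a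
Gassmann triple with `H` and `H'` of index `p`, then `H` and `H'` are conjugate in `G`. -/
theorem gassmann_trivial_alternating_group (p : ℕ) (hp : p.Prime)
    (H H' : Subgroup (alternatingGroup (Fin p)))
    (hH : H.index = p) (hH' : H'.index = p) (hG : IsGassmannTriple H H') :
    ∃ x : alternatingGroup (Fin p), Subgroup.map (MulAut.conj x).toMonoidHom H = H' :=
  gassmann_trivial_alternating_group_general p hp H H' hH hH'
end

section
/- Let G be a finite group with subgroups H and H', let α be a finite-dimensional complex representation of H and α' a finite-dimensional complex representation of H', and set ψ = Ind_H^G α and ψ' = Ind_{H'}^G α'. If ⟨ᾱ ⊗ ψ|_H, 1_H⟩_H = ⟨ᾱ' ⊗ ψ|_{H'}, 1_{H'}⟩_{H'} and ⟨ᾱ ⊗ ψ'|_H, 1_H⟩_H = ⟨ᾱ' ⊗ ψ'|_{H'}, 1_{H'}⟩_{H'}, then ψ and ψ' are isomorphic. Here ᾱ, ᾱ' denote dual representations, 1_H, 1_{H'} trivial representations, and restriction is denoted by |. -/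
open scoped Classical

/-- The inner product of two class functions on a finite group `G`:
`⟨χ, χ'⟩_G = (1/|G|) · Σ_{g ∈ G} χ(g) · conj(χ'(g))`. -/
noncomputable def innerFn {G : Type*} [Group G] (χ χ' : G → ℂ) : ℂ :=
  (Nat.card G : ℂ)⁻¹ * ∑ᶠ g : G, χ g * (starRingEnd ℂ) (χ' g)

/-!
By Frobenius reciprocity `⟨θ|_H, α⟩_H = ⟨θ, Ind_H^G α⟩_G` for class functions `θ` on `G`, the two
hypotheses say `⟨ψ, ψ⟩ = ⟨ψ, ψ'⟩` and `⟨ψ', ψ⟩ = ⟨ψ', ψ'⟩`, so `⟨ψ - ψ', ψ - ψ'⟩ = 0` and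
`ψ = ψ'` by positive definiteness. Here `⟨ᾱ ⊗ θ|_H, 1_H⟩_H = ⟨θ|_H, α⟩_H` because
`χ(g⁻¹) = conj χ(g)` for characters: `ρ(g)` has finite order, so it is diagonalizable with
eigenvalues on the unit circle, where inversion is complex conjugation.
-/

open Polynomial in
theorem Module.End.isSemisimple_of_pow_eq_one {V : Type*} [AddCommGroup V] [Module ℂ V]
    [FiniteDimensional ℂ V] {f : Module.End ℂ V} {n : ℕ} (hn : n ≠ 0) (hf : f ^ n = 1) :
    f.IsSemisimple :=
  isSemisimple_of_squarefree_aeval_eq_zero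
    (X_pow_sub_one_separable_iff.mpr (Nat.cast_ne_zero.mpr hn)).squarefree (by simp [hf])

theorem Module.End.HasEigenvalue.pow_eq_one {R M : Type*} [CommRing R] [IsDomain R]
    [AddCommGroup M] [Module R M] [Module.IsTorsionFree R M] {f : Module.End R M} {μ : R}
    (hμ : f.HasEigenvalue μ) {n : ℕ} (hf : f ^ n = 1) : μ ^ n = 1 := by
  obtain ⟨x, hx⟩ := hμ.exists_hasEigenvector
  have hpow := hx.pow_apply n
  rw [hf, Module.End.one_apply] at hpow
  exact smul_left_injective R hx.2 (hpow.symm.trans (one_smul R x).symm)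

theorem LinearMap.trace_restrict_eq_mul_finrank {R M : Type*} [Field R] [AddCommGroup M]
    [Module R M] [FiniteDimensional R M] {f : Module.End R M} {p : Submodule R M} (c : R)
    (hc : ∀ x ∈ p, f x = c • x) (hfp : Set.MapsTo f p p) :
    LinearMap.trace R p (f.restrict hfp) = c * Module.finrank R p := by
  have hscalar : f.restrict hfp = c • LinearMap.id := by
    ext x
    exact hc x x.2
  rw [hscalar, map_smul, LinearMap.trace_id, smul_eq_mul]

theorem LinearMap.trace_eq_star_trace_of_mul_eq_one {V : Type*} [AddCommGroup V] [Module ℂ V]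
    [FiniteDimensional ℂ V] {f g : Module.End ℂ V} {n : ℕ} (hn : n ≠ 0) (hf : f ^ n = 1)
    (hgf : g * f = 1) :
    LinearMap.trace ℂ V g = star (LinearMap.trace ℂ V f) := by
  have hind := f.eigenspaces_iSupIndep
  have hds := DirectSum.isInternal_submodule_of_iSupIndep_of_iSup_eq_top hind
    (Module.End.isSemisimple_of_pow_eq_one hn hf).iSup_eigenspace_eq_top
  have hfin := WellFoundedGT.finite_ne_bot_of_iSupIndep hind
  have hf_apply (μ : ℂ) : ∀ x ∈ f.eigenspace μ, f x = μ • x := fun x hx =>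
    Module.End.mem_eigenspace_iff.mp hx
  have hg_apply (μ : ℂ) : ∀ x ∈ f.eigenspace μ, g x = μ⁻¹ • x := by
    intro x hx
    have hx' : x = μ • g x := by
      rw [← map_smul, ← hf_apply μ x hx, ← Module.End.mul_apply, hgf, Module.End.one_apply]
    rcases eq_or_ne μ 0 with rfl | hμ
    · rw [show x = 0 by simpa using hx', map_zero, smul_zero]
    · rw [hx', smul_smul, inv_mul_cancel₀ hμ, one_smul, ← hx']
  have hf_maps (μ : ℂ) : Set.MapsTo f (f.eigenspace μ) (f.eigenspace μ) := fun x hx =>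
    (hf_apply μ x hx).symm ▸ (f.eigenspace μ).smul_mem μ hx
  have hg_maps (μ : ℂ) : Set.MapsTo g (f.eigenspace μ) (f.eigenspace μ) := fun x hx =>
    (hg_apply μ x hx).symm ▸ (f.eigenspace μ).smul_mem μ⁻¹ hx
  rw [LinearMap.trace_eq_sum_trace_restrict' hds hfin hg_maps,
    LinearMap.trace_eq_sum_trace_restrict' hds hfin hf_maps, star_sum]
  refine Finset.sum_congr rfl fun μ hμ => ?_
  have hμ_root : μ ^ n = 1 := Module.End.HasEigenvalue.pow_eq_one (hfin.mem_toFinset.mp hμ) hf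
  rw [trace_restrict_eq_mul_finrank _ (hf_apply μ), trace_restrict_eq_mul_finrank _ (hg_apply μ),
    star_mul, star_natCast, Complex.inv_eq_conj (Complex.norm_eq_one_of_pow_eq_one hμ_root hn),
    starRingEnd_apply, mul_comm]

theorem FDRep.char_inv {K : Type} [Group K] [Finite K] (V : FDRep ℂ K) (g : K) :
    V.character g⁻¹ = star (V.character g) :=
  LinearMap.trace_eq_star_trace_of_mul_eq_one (orderOf_pos g).ne'
    (by rw [← map_pow, pow_orderOf_eq_one, map_one]) (by rw [← map_mul, inv_mul_cancel, map_one])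

theorem innerFn_char_inv_mul_one {K : Type} [Group K] [Finite K] (V : FDRep ℂ K) (θ : K → ℂ) :
    innerFn (fun x => V.character x⁻¹ * θ x) (fun _ => 1) = innerFn θ V.character := by
  simp only [innerFn, FDRep.char_inv, map_one, mul_one, starRingEnd_apply, mul_comm (star _)]

theorem eq_of_innerFn_eq {G : Type*} [Group G] [Finite G] {φ φ' : G → ℂ}
    (h : innerFn φ φ = innerFn φ φ') (h' : innerFn φ' φ = innerFn φ' φ') : φ = φ' := by
  have := Fintype.ofFinite G
  simp only [innerFn, finsum_eq_sum_of_fintype, starRingEnd_apply] at h h'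
  have hcard : (Nat.card G : ℂ)⁻¹ ≠ 0 := inv_ne_zero (Nat.cast_ne_zero.mpr Nat.card_pos.ne')
  replace h := mul_left_cancel₀ hcard h
  replace h' := mul_left_cancel₀ hcard h'
  have hsum : ∑ g, (φ g - φ' g) * star (φ g - φ' g) = 0 := by
    simp only [star_sub, sub_mul, mul_sub, Finset.sum_sub_distrib]
    linear_combination h - h'
  open ComplexOrder in
  have hzero := (Finset.sum_eq_zero_iff_of_nonneg fun g _ => mul_star_self_nonneg _).mp hsum
  funext g
  exact sub_eq_zero.mp ((CStarRing.mul_star_self_eq_zero_iff _).mp (hzero g (Finset.mem_univ g)))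

theorem Subgroup.sum_dite_mem {G M : Type*} [Group G] [Fintype G] [AddCommMonoid M]
    (H : Subgroup G) [DecidablePred (· ∈ H)] (F : H → M) :
    ∑ g : G, (if h : g ∈ H then F ⟨g, h⟩ else 0) = ∑ h : H, F h := by
  rw [← Fintype.sum_subtype_add_sum_subtype (· ∈ H),
    Finset.sum_eq_zero (s := Finset.univ (α := {g // g ∉ H})) fun g _ => dif_neg g.2, add_zero]
  exact Finset.sum_congr rfl fun h _ => dif_pos h.2

section Induction

variable {G : Type*} [Group G] (H : Subgroup G)

theorem indFn_apply [Fintype G] (χ : H → ℂ) (g : G) :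
    indFn H χ g = (Nat.card H : ℂ)⁻¹ *
      ∑ x, if h : x⁻¹ * g * x ∈ H then χ ⟨x⁻¹ * g * x, h⟩ else 0 := by
  rw [indFn, finsum_eq_sum_of_fintype]

theorem indFn_conj [Finite G] (χ : H → ℂ) (x g : G) :
    indFn H χ (x * g * x⁻¹) = indFn H χ g := by
  have := Fintype.ofFinite G
  simp only [indFn_apply]
  congr 1
  refine Fintype.sum_equiv (Equiv.mulLeft x⁻¹) _ _ fun y => ?_
  simp only [Equiv.coe_mulLeft, mul_inv_rev, inv_inv, mul_assoc]

theorem star_indFn [Fintype G] (χ : H → ℂ) (g : G) :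
    star (indFn H χ g) = indFn H (star χ) g := by
  simp [indFn_apply, star_sum, apply_dite star]

theorem sum_mul_indFn [Fintype G] (χ : H → ℂ) {θ : G → ℂ} (hθ : ∀ x g, θ (x * g * x⁻¹) = θ g) :
    ∑ g, θ g * indFn H χ g = (Nat.card G / Nat.card H : ℂ) * ∑ h : H, θ h * χ h := by
  have hconj (x : G) :
      ∑ g, θ g * (if h : x⁻¹ * g * x ∈ H then χ ⟨x⁻¹ * g * x, h⟩ else 0) =
        ∑ h : H, θ h * χ h := by
    refine (Fintype.sum_equiv (MulAut.conj x).toEquiv _ _ fun g => ?_).symm.trans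
      (H.sum_dite_mem fun h => θ h * χ h)
    simp only [MulEquiv.toEquiv_eq_coe, MulEquiv.coe_toEquiv, MulAut.conj_apply, hθ,
      show x⁻¹ * (x * g * x⁻¹) * x = g by group, mul_dite, mul_zero]
  calc ∑ g, θ g * indFn H χ g
      = (Nat.card H : ℂ)⁻¹ *
          ∑ x, ∑ g, θ g * (if h : x⁻¹ * g * x ∈ H then χ ⟨x⁻¹ * g * x, h⟩ else 0) := by
        simp only [indFn_apply, Finset.mul_sum]
        rw [Finset.sum_comm]
        exact Finset.sum_congr rfl fun _ _ => Finset.sum_congr rfl fun _ _ => mul_left_comm _ _ _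
    _ = (Nat.card H : ℂ)⁻¹ * ∑ _x : G, ∑ h : H, θ h * χ h := by
        simp only [hconj]
    _ = (Nat.card G / Nat.card H : ℂ) * ∑ h : H, θ h * χ h := by
        rw [Finset.sum_const, Finset.card_univ, nsmul_eq_mul, Fintype.card_eq_nat_card]
        ring

theorem innerFn_restrict_eq_innerFn_indFn [Finite G] (χ : H → ℂ) {θ : G → ℂ}
    (hθ : ∀ x g, θ (x * g * x⁻¹) = θ g) :
    innerFn (fun h : H => θ h) χ = innerFn θ (indFn H χ) := by
  have := Fintype.ofFinite G
  have hG : (Nat.card G : ℂ) ≠ 0 := Nat.cast_ne_zero.mpr Nat.card_pos.ne'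
  simp only [innerFn, finsum_eq_sum_of_fintype, starRingEnd_apply, star_indFn]
  rw [sum_mul_indFn H _ hθ]
  simp only [Pi.star_apply]
  field_simp

end Induction

/-- Let `ψ = Ind_H^G α` and `ψ' = Ind_{H'}^G α'`. If
`⟨ᾱ ⊗ ψ|_H, 1_H⟩_H = ⟨ᾱ' ⊗ ψ|_{H'}, 1_{H'}⟩_{H'}` and
`⟨ᾱ ⊗ ψ'|_H, 1_H⟩_H = ⟨ᾱ' ⊗ ψ'|_{H'}, 1_{H'}⟩_{H'}`,
then `ψ` and `ψ'` are isomorphic (equality of induced characters). Here duals have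
characters `x ↦ χ(x⁻¹)`, tensor products have product characters, and the trivial
representations have character constantly `1`. -/
theorem ind_char_eq_of_inner_products_eq {G : Type} [Group G] [Fintype G]
    (H H' : Subgroup G) (α : FDRep ℂ H) (α' : FDRep ℂ H')
    (h1 : innerFn (G := H)
        (fun x => α.character x⁻¹ * indFn H (fun y => α.character y) (x : G)) (fun _ => 1) =
      innerFn (G := H')
        (fun x => α'.character x⁻¹ * indFn H (fun y => α.character y) (x : G)) (fun _ => 1))
    (h2 : innerFn (G := H)
        (fun x => α.character x⁻¹ * indFn H' (fun y => α'.character y) (x : G)) (fun _ => 1) =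
      innerFn (G := H')
        (fun x => α'.character x⁻¹ * indFn H' (fun y => α'.character y) (x : G)) (fun _ => 1)) :
    indFn H (fun x => α.character x) = indFn H' (fun x => α'.character x) := by
  rw [innerFn_char_inv_mul_one α, innerFn_char_inv_mul_one α',
    innerFn_restrict_eq_innerFn_indFn H _ (indFn_conj H _),
    innerFn_restrict_eq_innerFn_indFn H' _ (indFn_conj H _)] at h1
  rw [innerFn_char_inv_mul_one α, innerFn_char_inv_mul_one α',
    innerFn_restrict_eq_innerFn_indFn H _ (indFn_conj H' _),
    innerFn_restrict_eq_innerFn_indFn H' _ (indFn_conj H' _)] at h2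
  exact eq_of_innerFn_eq h1 h2
end

section
/- Let l be an odd prime, n ≥ 1, and let A be an n × n complex matrix such that every row and every column of A contains exactly one nonzero entry, and every nonzero entry of A is an l-th root of unity. If the trace of A equals (n − 1) + ζ for some l-th root of unity ζ with ζ ≠ 1, then A is a diagonal matrix. -/
/-!
Every diagonal entry of `A` is `0` or has modulus `1`, so `Re (trace A)` is at most the number of
nonzero diagonal entries. Since `l` is odd, `ζ ≠ -1`, hence `Re ζ > -1` and at most one diagonal
entry vanishes. In a matrix with exactly one nonzero entry per row and column a single vanishing
diagonal entry is impossible: the nonzero entry `A i₀ j` of that row would share column `j` with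
`A j j ≠ 0`. So the whole diagonal is nonzero and, by row uniqueness, it carries all the entries.
-/

open Finset

theorem Complex.neg_one_lt_re_of_pow_eq_one {ζ : ℂ} {l : ℕ} (hl : Odd l) (h : ζ ^ l = 1) :
    -1 < ζ.re := by
  have hnorm : ‖ζ‖ = 1 := Complex.norm_eq_one_of_pow_eq_one h hl.pos.ne'
  have hζ : ζ ≠ -1 := by
    rintro rfl
    rw [hl.neg_one_pow] at h
    norm_num at h
  refine lt_of_le_of_ne (neg_le_of_abs_le ((Complex.abs_re_le_norm ζ).trans hnorm.le))
    fun hre => hζ ?_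
  have him : ζ.im = 0 := Complex.abs_re_eq_norm.mp (by rw [hnorm, ← hre]; norm_num)
  exact Complex.ext (by simp [← hre]) (by simp [him])

namespace Matrix

variable {ι : Type*}

theorem re_trace_add_card_diag_eq_zero_le [Fintype ι] (A : Matrix ι ι ℂ)
    (h : ∀ i, ‖A i i‖ ≤ 1) :
    A.trace.re + #{i | A i i = 0} ≤ Fintype.card ι := by
  have hterm : ∀ i, (A i i).re + (if A i i = 0 then 1 else 0) ≤ 1 := by
    intro i
    split_ifs with hi
    · simp [hi]
    · linarith [Complex.re_le_norm (A i i), h i]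
  have hsum := sum_le_sum fun i (_ : i ∈ univ) => hterm i
  simpa [sum_add_distrib, sum_boole, trace, Complex.re_sum] using hsum

variable {α : Type*} [Zero α]

theorem diag_ne_zero_of_subsingleton (A : Matrix ι ι α)
    (hrow : ∀ i, ∃ j, A i j ≠ 0) (hcol : ∀ j, ∃! i, A i j ≠ 0)
    (hzero : {i | A i i = 0}.Subsingleton) (i₀ : ι) : A i₀ i₀ ≠ 0 := by
  intro hi₀
  obtain ⟨j, hj⟩ := hrow i₀
  have hji₀ : j ≠ i₀ := by rintro rfl; exact hj hi₀
  have hjj : A j j ≠ 0 := fun hjj => hji₀ (hzero hjj hi₀)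
  exact hji₀ ((hcol j).unique hjj hj)

theorem isDiag_of_diag_ne_zero (A : Matrix ι ι α) (hrow : ∀ i, ∃! j, A i j ≠ 0)
    (hdiag : ∀ i, A i i ≠ 0) : A.IsDiag := by
  intro i j hij
  by_contra hj
  exact hij ((hrow i).unique (hdiag i) hj)

end Matrix

theorem isDiag_of_trace_eq_general {l n : ℕ} (hodd : Odd l)
    (A : Matrix (Fin n) (Fin n) ℂ)
    (hrow : ∀ i, ∃! j, A i j ≠ 0)
    (hcol : ∀ j, ∃! i, A i j ≠ 0)
    (hroot : ∀ i j, A i j ≠ 0 → A i j ^ l = 1)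
    (ζ : ℂ) (hζl : ζ ^ l = 1)
    (htr : A.trace = ((n : ℂ) - 1) + ζ) :
    A.IsDiag := by
  have hnorm : ∀ i, ‖A i i‖ ≤ 1 := fun i => by
    by_cases hi : A i i = 0
    · simp [hi]
    · exact (Complex.norm_eq_one_of_pow_eq_one (hroot i i hi) hodd.pos.ne').le
  have hle := A.re_trace_add_card_diag_eq_zero_le hnorm
  have hre : A.trace.re = n - 1 + ζ.re := by simp [htr]
  have hζ := Complex.neg_one_lt_re_of_pow_eq_one hodd hζl
  have hcard : #{i | A i i = 0} ≤ 1 := by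
    have : (#{i | A i i = 0} : ℝ) < 2 := by simp only [Fintype.card_fin] at hle; linarith
    exact Nat.lt_succ_iff.mp (by exact_mod_cast this)
  have hzero : {i | A i i = 0}.Subsingleton := fun a ha b hb =>
    card_le_one.mp hcard a (by simpa using ha) b (by simpa using hb)
  exact A.isDiag_of_diag_ne_zero hrow
    (A.diag_ne_zero_of_subsingleton (fun i => (hrow i).exists) hcol hzero)

/-- Let `l` be an odd prime, `n ≥ 1` and `A` an `n × n` complex matrix with exactly one
nonzero entry in each row and each column, all nonzero entries being `l`-th roots of unity.
If `trace A = (n − 1) + ζ` for some `l`-th root of unity `ζ ≠ 1`, then `A` is diagonal. -/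
theorem isDiag_of_trace_eq {l n : ℕ} (hl : l.Prime) (hodd : Odd l) (hn : 1 ≤ n)
    (A : Matrix (Fin n) (Fin n) ℂ)
    (hrow : ∀ i, ∃! j, A i j ≠ 0)
    (hcol : ∀ j, ∃! i, A i j ≠ 0)
    (hroot : ∀ i j, A i j ≠ 0 → A i j ^ l = 1)
    (ζ : ℂ) (hζl : ζ ^ l = 1) (hζ1 : ζ ≠ 1)
    (htr : A.trace = ((n : ℂ) - 1) + ζ) :
    A.IsDiag :=
  isDiag_of_trace_eq_general hodd A hrow hcol hroot ζ hζl htr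
end
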